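/- Let c be a real number with |c| > 27/4 and β = S(c). If c < -27/4, then β is the unique real root of x³ - cx + c. If c > 27/4, then 1 < β < 3/2 and β is the unique root of x³ - cx + c in the interval (1, 3/2). -/

import Mathlib

/-!
Let `R(n) = C(3n, n)/(2n+1)`, the number of ternary trees with `n` internal nodes. The
convolution identity for the Raney numbers `p/(p+3n) C(p+3n, n)` gives `T = 1 + x T³` for the
generating function `T(x) = ∑ R(n) xⁿ`, which converges for `|x| < 4/27` since
`C(3n, n) ≤ (27/4)ⁿ`. Hence `β = T(1/c)` satisfies `cβ = c + β³`. Another root `x` would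
satisfy `x² + xβ + β² = c`, impossible for `c < 0`, and for `c > 27/4` also when `x, β < 3/2`.
Finally `T(1/c) < 3/2`: `T` is continuous on `[0, 1/c]` with `T(0) = 1`, and `T(y) = 3/2` would
force `y = 4/27`.
-/

open Finset

/-- The Raney numbers `R_p(n) = p/(p+3n) C(p+3n, n)`: `R_p(n)` counts forests of `p` ternary trees
with `n` internal nodes, so `R_1 * R_(p+1) = R_(p+2)` as a convolution. -/
noncomputable def raney (p n : ℕ) : ℝ := p / (p + 3 * n) * (p + 3 * n).choose n

lemma raney_zero_left (n : ℕ) : raney 0 n = 0 := by simp [raney]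

lemma raney_succ_zero (p : ℕ) : raney (p + 1) 0 = 1 := by
  simp [raney, (Nat.cast_add_one_pos p).ne']

lemma raney_nonneg (p n : ℕ) : 0 ≤ raney p n := by unfold raney; positivity

lemma raney_succ_succ (p n : ℕ) : raney (p + 1) (n + 1) = raney p (n + 1) + raney (p + 3) n := by
  set m := p + 3 + 3 * n
  have pascal : ((m + 1).choose (n + 1) : ℝ) = m.choose n + m.choose (n + 1) := by
    exact_mod_cast Nat.choose_succ_succ m n
  have ratio : (m.choose (n + 1) : ℝ) * (n + 1) = m.choose n * (p + 3 + 2 * n) := by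
    have h := Nat.choose_succ_right_eq m n
    rw [show m - n = p + 3 + 2 * n by omega] at h
    exact_mod_cast h
  unfold raney
  rw [show p + 1 + 3 * (n + 1) = m + 1 by omega, show p + 3 * (n + 1) = m by omega,
    show p + 3 + 3 * n = m by omega]
  push_cast
  rw [pascal]
  field_simp
  linear_combination (3 * ((p : ℝ) + 3 + 3 * n)) * ratio

lemma raney_one_succ (n : ℕ) : raney 1 (n + 1) = raney 3 n := by
  simpa [raney_zero_left] using raney_succ_succ 0 n

lemma raney_convolution (n : ℕ) : ∀ p : ℕ,
    ∑ ij ∈ antidiagonal n, raney 1 ij.1 * raney (p + 1) ij.2 = raney (p + 2) n := by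
  induction n with
  | zero => simp [raney_succ_zero]
  | succ n ih =>
    intro p
    induction p with
    | zero =>
      show ∑ ij ∈ antidiagonal (n + 1), raney 1 ij.1 * raney 1 ij.2 = raney 2 (n + 1)
      have h : ∑ ij ∈ antidiagonal n, raney 1 ij.1 * raney 3 ij.2 = raney 4 n := ih 2
      simp only [Nat.sum_antidiagonal_succ', raney_succ_zero, mul_one, raney_one_succ, h]
      rw [raney_succ_succ 1 n, raney_one_succ]
    | succ p ihp =>
      show ∑ ij ∈ antidiagonal (n + 1), raney 1 ij.1 * raney (p + 2) ij.2 = raney (p + 3) (n + 1)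
      have h : ∑ ij ∈ antidiagonal n, raney 1 ij.1 * raney (p + 4) ij.2 = raney (p + 5) n :=
        ih (p + 3)
      have step (j : ℕ) : raney (p + 2) (j + 1) = raney (p + 1) (j + 1) + raney (p + 4) j :=
        raney_succ_succ (p + 1) j
      have last : raney (p + 3) (n + 1) = raney (p + 2) (n + 1) + raney (p + 5) n :=
        raney_succ_succ (p + 2) n
      simp only [Nat.sum_antidiagonal_succ', raney_succ_zero, mul_one] at ihp ⊢
      simp only [step, mul_add, sum_add_distrib, h]
      linarith

lemma raney_one_eq (n : ℕ) : raney 1 n = 1 / (2 * n + 1) * (3 * n).choose n := by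
  have h := Nat.choose_mul_succ_eq (3 * n) n
  rw [show 3 * n + 1 - n = 2 * n + 1 by omega] at h
  have hR : ((3 * n).choose n : ℝ) * (3 * n + 1) = (3 * n + 1).choose n * (2 * n + 1) := by
    exact_mod_cast h
  unfold raney
  rw [add_comm 1 (3 * n)]
  push_cast
  field_simp
  linear_combination -hR

lemma choose_three_mul_le (n : ℕ) : ((3 * n).choose n : ℝ) ≤ (27 / 4) ^ n := by
  have term_le : (1 / 3 : ℝ) ^ n * (2 / 3) ^ (3 * n - n) * (3 * n).choose n ≤
      (1 / 3 + 2 / 3) ^ (3 * n) := by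
    rw [add_pow]
    exact single_le_sum (f := fun m => (1 / 3 : ℝ) ^ m * (2 / 3) ^ (3 * n - m) * (3 * n).choose m)
      (fun m _ => by positivity) (mem_range.2 (by omega))
  have h : (4 / 27 : ℝ) ^ n * (3 * n).choose n ≤ 1 := by
    rw [show 3 * n - n = 2 * n by omega, pow_mul, ← mul_pow] at term_le
    norm_num at term_le
    exact term_le
  calc ((3 * n).choose n : ℝ) = (27 / 4) ^ n * ((4 / 27) ^ n * (3 * n).choose n) := by
        rw [← mul_assoc, ← mul_pow]; norm_num
    _ ≤ (27 / 4) ^ n := mul_le_of_le_one_right (by positivity) h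

lemma raney_one_le (n : ℕ) : raney 1 n ≤ (27 / 4) ^ n := by
  rw [raney_one_eq, one_div_mul_eq_div]
  refine (div_le_self (by positivity) ?_).trans (choose_three_mul_le n)
  linarith [n.cast_nonneg (α := ℝ)]

noncomputable def ternaryGF (x : ℝ) : ℝ := ∑' n, raney 1 n * x ^ n

lemma norm_raney_one_mul_pow_le {x r : ℝ} (hx : |x| ≤ r) (n : ℕ) :
    ‖raney 1 n * x ^ n‖ ≤ (27 / 4 * r) ^ n := by
  rw [norm_mul, norm_pow, Real.norm_of_nonneg (raney_nonneg 1 n), Real.norm_eq_abs, mul_pow]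
  exact mul_le_mul (raney_one_le n) (pow_le_pow_left₀ (abs_nonneg x) hx n) (by positivity)
    (by positivity)

lemma summable_norm_raney_one_mul_pow {x : ℝ} (hx : |x| < 4 / 27) :
    Summable fun n => ‖raney 1 n * x ^ n‖ :=
  (summable_geometric_of_lt_one (by positivity) (by linarith)).of_nonneg_of_le
    (fun _ => norm_nonneg _) (norm_raney_one_mul_pow_le le_rfl)

lemma raney_cauchy_product (x : ℝ) (p n : ℕ) :
    ∑ ij ∈ antidiagonal n, raney 1 ij.1 * x ^ ij.1 * (raney (p + 1) ij.2 * x ^ ij.2) =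
      raney (p + 2) n * x ^ n := by
  rw [← raney_convolution n p, sum_mul]
  refine sum_congr rfl fun ij hij => ?_
  rw [← mem_antidiagonal.1 hij, pow_add]
  ring

lemma ternaryGF_eq {x : ℝ} (hx : |x| < 4 / 27) : ternaryGF x = 1 + x * ternaryGF x ^ 3 := by
  have s1 := summable_norm_raney_one_mul_pow hx
  have s2 : Summable fun n => ‖raney 2 n * x ^ n‖ := by
    simpa only [raney_cauchy_product x 0] using
      summable_norm_sum_mul_antidiagonal_of_summable_norm s1 s1
  have sq : ternaryGF x * ternaryGF x = ∑' n, raney 2 n * x ^ n := by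
    rw [ternaryGF, tsum_mul_tsum_eq_tsum_sum_antidiagonal_of_summable_norm s1 s1]
    exact tsum_congr (raney_cauchy_product x 0)
  have cube : ternaryGF x * ∑' n, raney 2 n * x ^ n = ∑' n, raney 3 n * x ^ n := by
    rw [ternaryGF, tsum_mul_tsum_eq_tsum_sum_antidiagonal_of_summable_norm s1 s2]
    exact tsum_congr (raney_cauchy_product x 1)
  have shift : ternaryGF x = 1 + x * ∑' n, raney 3 n * x ^ n := by
    rw [ternaryGF, s1.of_norm.tsum_eq_zero_add, ← tsum_mul_left]
    simp only [raney_one_succ, raney_succ_zero 0, pow_zero, mul_one, pow_succ]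
    congr 1
    exact tsum_congr fun n => by ring
  calc ternaryGF x = 1 + x * ∑' n, raney 3 n * x ^ n := shift
    _ = 1 + x * ternaryGF x ^ 3 := by rw [← cube, ← sq]; ring

lemma ternaryGF_zero : ternaryGF 0 = 1 := by
  simpa using ternaryGF_eq (x := 0) (by norm_num)

lemma one_lt_ternaryGF {x : ℝ} (hx0 : 0 < x) (hx : x < 4 / 27) : 1 < ternaryGF x := by
  have hT := ternaryGF_eq (x := x) (by rwa [abs_of_pos hx0])
  have hT0 : 0 ≤ ternaryGF x := tsum_nonneg fun n => mul_nonneg (raney_nonneg 1 n) (by positivity)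
  have : 0 < ternaryGF x := by nlinarith [pow_nonneg hT0 3]
  nlinarith [pow_pos this 3]

lemma continuousOn_ternaryGF {r : ℝ} (hr0 : 0 ≤ r) (hr : r < 4 / 27) :
    ContinuousOn ternaryGF (Set.Icc (-r) r) :=
  continuousOn_tsum (fun n => (continuous_const.mul (continuous_pow n)).continuousOn)
    (summable_geometric_of_lt_one (by positivity) (by linarith))
    fun n _ hx => norm_raney_one_mul_pow_le (abs_le.2 hx) n

lemma ternaryGF_lt_three_halves {a : ℝ} (ha0 : 0 ≤ a) (ha : a < 4 / 27) : ternaryGF a < 3 / 2 := by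
  by_contra! h
  obtain ⟨y, hy, hTy⟩ := intermediate_value_Icc ha0
    ((continuousOn_ternaryGF ha0 ha).mono (Set.Icc_subset_Icc (by linarith) le_rfl))
    (show (3 / 2 : ℝ) ∈ Set.Icc (ternaryGF 0) (ternaryGF a) by
      rw [ternaryGF_zero]; exact ⟨by norm_num, h⟩)
  have hT := ternaryGF_eq (x := y) (by rw [abs_of_nonneg hy.1]; linarith [hy.2])
  rw [hTy] at hT
  linarith [hy.2]

lemma eq_of_cubic_roots {c x y : ℝ} (hx : x ^ 3 - c * x + c = 0) (hy : y ^ 3 - c * y + c = 0)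
    (h : x ^ 2 + x * y + y ^ 2 ≠ c) : x = y := by
  have hfac : (x - y) * (x ^ 2 + x * y + y ^ 2 - c) = 0 := by linear_combination hx - hy
  rcases mul_eq_zero.1 hfac with hxy | hq
  · linarith
  · exact absurd (by linarith) h

/-- For `c < -27/4`, `β = S(c)` is the unique real root of `x³ - cx + c`;
for `c > 27/4`, `1 < β < 3/2` and `β` is the unique root in `(1, 3/2)`. -/
theorem hypergeometric_series_which_root (c : ℝ) (hc : |c| > 27 / 4) :
    let β : ℝ :=
      ∑' n : ℕ, (1 / (2 * (n : ℝ) + 1)) * (Nat.choose (3 * n) n : ℝ) * c⁻¹ ^ n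
    (c < -27 / 4 → β ^ 3 - c * β + c = 0 ∧
      ∀ x : ℝ, x ^ 3 - c * x + c = 0 → x = β) ∧
    (c > 27 / 4 → 1 < β ∧ β < 3 / 2 ∧ β ^ 3 - c * β + c = 0 ∧
      ∀ x : ℝ, x ^ 3 - c * x + c = 0 → 1 < x → x < 3 / 2 → x = β) := by
  intro β
  have hc0 : c ≠ 0 := by rintro rfl; norm_num at hc
  have hinv : |c⁻¹| < 4 / 27 := by
    rw [abs_inv, show (4 : ℝ) / 27 = (27 / 4)⁻¹ by norm_num]
    exact inv_strictAnti₀ (by norm_num) hc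
  have hβ : β = ternaryGF c⁻¹ := tsum_congr fun n => by rw [raney_one_eq]
  have hroot : β ^ 3 - c * β + c = 0 := by
    have h := ternaryGF_eq hinv
    rw [← hβ] at h
    linear_combination (-c) * h - β ^ 3 * mul_inv_cancel₀ hc0
  refine ⟨fun hneg => ⟨hroot, fun x hx => eq_of_cubic_roots hx hroot ?_⟩, fun hpos => ?_⟩
  · nlinarith [sq_nonneg (x + β), sq_nonneg x, sq_nonneg β]
  have ha0 : 0 < c⁻¹ := inv_pos.2 (by linarith)
  have ha : c⁻¹ < 4 / 27 := (abs_lt.1 hinv).2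
  have h1 : 1 < β := hβ ▸ one_lt_ternaryGF ha0 ha
  have h2 : β < 3 / 2 := hβ ▸ ternaryGF_lt_three_halves ha0.le ha
  refine ⟨h1, h2, hroot, fun x hx hx1 hx2 => eq_of_cubic_roots hx hroot ?_⟩
  nlinarith
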